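/- For every q with 0 < q < 3√3/2, letting m denote the unique real root of z³ − z + 1/q = 0, one has H̃(q) = h̃(m), i.e., H̃(q) = √((m+1)/(m−1)) · exp((m² − 2)/(2m(m² − 1))). -/

import Mathlib

open Filter Set

/-- `w` is the root of `q (z^3 - z) + 1 = 0` with `Im w ≥ 0`, `Re w > 0` having the
smallest real part among all such roots. -/
def IsQtilde (q : ℝ) (w : ℂ) : Prop :=
  (q : ℂ) * (w ^ 3 - w) + 1 = 0 ∧ 0 ≤ w.im ∧ 0 < w.re ∧
    ∀ z : ℂ, (q : ℂ) * (z ^ 3 - z) + 1 = 0 → 0 ≤ z.im → 0 < z.re → w.re ≤ z.re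

/-- `H̃(q) = |(q̃ - 1)/(q̃ + 1)| · exp(q · Re(q̃²))` where `q̃` is the distinguished root. -/
noncomputable def Htilde (q : ℝ) : ℝ :=
  ‖(Classical.epsilon (IsQtilde q) - 1) / (Classical.epsilon (IsQtilde q) + 1)‖ *
    Real.exp (q * ((Classical.epsilon (IsQtilde q)) ^ 2).re)

/-- `h̃(m) = √((m+1)/(m-1)) · exp((m² - 2)/(2 m (m² - 1)))`. -/
noncomputable def htilde (m : ℝ) : ℝ :=
  Real.sqrt ((m + 1) / (m - 1)) * Real.exp ((m ^ 2 - 2) / (2 * m * (m ^ 2 - 1)))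

/-!
Since `q < 3√3/2`, the real root `m` of `z³ - z + 1/q` lies below `-2/√3`. Dividing the cubic
by `z - m` leaves `z² + m z + m² - 1`, whose roots `-m/2 ± i √(3m²/4 - 1)` are non-real, so
`q̃ = -m/2 + i √(3m²/4 - 1)` is the only root in the closed upper right quadrant. Then
`|q̃ ∓ 1|² = m² ± m` and `Re q̃² = 1 - m²/2`, and `q = -1/(m³ - m)` turns `q · Re q̃²` into the
exponent of `h̃(m)`.
-/

open ComplexConjugate

theorem sqrt_three_mul_lt_neg_two {q m : ℝ} (hq0 : 0 < q) (hq : q < 3 * √3 / 2)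
    (hqm : q * (m ^ 3 - m) = -1) : √3 * m < -2 := by
  have hs : √3 ^ 2 = 3 := Real.sq_sqrt (by norm_num)
  have hneg : 3 * √3 * (m ^ 3 - m) + 2 < 0 := by
    have hmul : q * (3 * √3 * (m ^ 3 - m) + 2) = 2 * q - 3 * √3 := by
      linear_combination 3 * √3 * hqm
    by_contra! h
    linarith [mul_nonneg hq0.le h]
  have hfac : (√3 * m + 2) * (√3 * m - 1) ^ 2 = 3 * √3 * (m ^ 3 - m) + 2 := by
    linear_combination √3 * m ^ 3 * hs
  by_contra! h
  linarith [mul_nonneg (by linarith : 0 ≤ √3 * m + 2) (sq_nonneg (√3 * m - 1))]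

noncomputable def upperRoot (m : ℝ) : ℂ := ⟨-m / 2, √(3 * m ^ 2 / 4 - 1)⟩

section upperRoot

variable {m : ℝ}

@[simp] theorem upperRoot_re (m : ℝ) : (upperRoot m).re = -m / 2 := rfl

theorem upperRoot_im_sq (hm : 4 ≤ 3 * m ^ 2) : (upperRoot m).im ^ 2 = 3 * m ^ 2 / 4 - 1 :=
  Real.sq_sqrt (by linarith)

theorem upperRoot_im_pos (hm : 4 < 3 * m ^ 2) : 0 < (upperRoot m).im :=
  Real.sqrt_pos.2 (by linarith)

theorem cube_sub_self_sub_eq_mul (hm : 4 ≤ 3 * m ^ 2) (z : ℂ) :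
    z ^ 3 - z - ((m : ℂ) ^ 3 - m) =
      (z - m) * (z - upperRoot m) * (z - conj (upperRoot m)) := by
  have hadd : upperRoot m + conj (upperRoot m) = -m := by
    apply Complex.ext <;> simp
  have hmul : upperRoot m * conj (upperRoot m) = (m : ℂ) ^ 2 - 1 := by
    rw [Complex.mul_conj, Complex.normSq_apply, ← sq, ← sq, upperRoot_im_sq hm, upperRoot_re]
    push_cast
    ring
  linear_combination (m - z) * hmul + (z ^ 2 - m * z) * hadd

theorem eq_upperRoot_of_cube_sub_self_eq (hm0 : m < 0) (hm2 : 4 < 3 * m ^ 2) {z : ℂ}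
    (hz : z ^ 3 - z = (m : ℂ) ^ 3 - m) (him : 0 ≤ z.im) (hre : 0 < z.re) : z = upperRoot m := by
  have hprod := cube_sub_self_sub_eq_mul hm2.le z
  rw [sub_eq_zero.2 hz] at hprod
  rcases mul_eq_zero.1 hprod.symm with h | h
  · rcases mul_eq_zero.1 h with h | h
    · rw [sub_eq_zero.1 h, Complex.ofReal_re] at hre
      linarith
    · exact sub_eq_zero.1 h
  · rw [sub_eq_zero.1 h, Complex.conj_im] at him
    linarith [upperRoot_im_pos hm2]

theorem isQtilde_iff_eq_upperRoot {q : ℝ} (hqm : q * (m ^ 3 - m) = -1) (hm0 : m < 0)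
    (hm2 : 4 < 3 * m ^ 2) {w : ℂ} : IsQtilde q w ↔ w = upperRoot m := by
  have hroot : ∀ z : ℂ, (q : ℂ) * (z ^ 3 - z) + 1 = 0 ↔ z ^ 3 - z = (m : ℂ) ^ 3 - m := by
    have hqmC : (q : ℂ) * ((m : ℂ) ^ 3 - m) = -1 := by exact_mod_cast hqm
    have hq : (q : ℂ) ≠ 0 := left_ne_zero_of_mul (by rw [hqmC]; norm_num)
    intro z
    have hshift : (q : ℂ) * (z ^ 3 - z) + 1 = q * (z ^ 3 - z - ((m : ℂ) ^ 3 - m)) := by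
      linear_combination hqmC
    rw [hshift, mul_eq_zero, sub_eq_zero, or_iff_right hq]
  have hunique : ∀ z : ℂ, (q : ℂ) * (z ^ 3 - z) + 1 = 0 → 0 ≤ z.im → 0 < z.re →
      z = upperRoot m := fun z hz =>
    eq_upperRoot_of_cube_sub_self_eq hm0 hm2 ((hroot z).1 hz)
  constructor
  · rintro ⟨hw, him, hre, -⟩
    exact hunique w hw him hre
  · rintro rfl
    have hw : upperRoot m ^ 3 - upperRoot m = (m : ℂ) ^ 3 - m :=
      sub_eq_zero.1 (by rw [cube_sub_self_sub_eq_mul hm2.le]; ring)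
    refine ⟨(hroot _).2 hw, (upperRoot_im_pos hm2).le, by simp; linarith, ?_⟩
    intro z hz him hre
    rw [hunique z hz him hre]

theorem norm_upperRoot_sub_one_div_add_one (hm : 4 ≤ 3 * m ^ 2) :
    ‖(upperRoot m - 1) / (upperRoot m + 1)‖ = √((m + 1) / (m - 1)) := by
  have hm0 : m ≠ 0 := by rintro rfl; norm_num at hm
  rw [Complex.norm_def, Complex.normSq_div]
  congr 1
  simp only [Complex.normSq_apply, Complex.sub_re, Complex.add_re, Complex.sub_im,
    Complex.add_im, Complex.one_re, Complex.one_im, sub_zero, add_zero, ← sq,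
    upperRoot_re, upperRoot_im_sq hm]
  rw [← mul_div_mul_left (m + 1) (m - 1) hm0]
  congr 1 <;> ring

theorem upperRoot_sq_re (hm : 4 ≤ 3 * m ^ 2) : (upperRoot m ^ 2).re = 1 - m ^ 2 / 2 := by
  rw [sq, Complex.mul_re, ← sq, ← sq, upperRoot_im_sq hm, upperRoot_re]
  ring

end upperRoot

theorem Htilde_eq_htilde (q : ℝ) (hq0 : 0 < q) (hq : q < 3 * Real.sqrt 3 / 2)
    (m : ℝ) (hm : m ^ 3 - m + 1 / q = 0) :
    Htilde q = htilde m := by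
  have hqm : q * (m ^ 3 - m) = -1 := by
    field_simp at hm
    linear_combination hm
  have hsm := sqrt_three_mul_lt_neg_two hq0 hq hqm
  have hm0 : m < 0 := by nlinarith [Real.sqrt_nonneg 3]
  have hm2 : 4 < 3 * m ^ 2 := by nlinarith [Real.sq_sqrt (show (0 : ℝ) ≤ 3 by norm_num)]
  have heps : Classical.epsilon (IsQtilde q) = upperRoot m :=
    (isQtilde_iff_eq_upperRoot hqm hm0 hm2).1 <|
      Classical.epsilon_spec ⟨_, (isQtilde_iff_eq_upperRoot hqm hm0 hm2).2 rfl⟩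
  rw [Htilde, htilde, heps, norm_upperRoot_sub_one_div_add_one hm2.le, upperRoot_sq_re hm2.le]
  have hden : 2 * m * (m ^ 2 - 1) ≠ 0 := by nlinarith
  congr 2
  rw [eq_div_iff hden]
  linear_combination (2 - m ^ 2) * hqm
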